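/- arXiv:2605.26739 — 3 statements merged into one kernel-verified Lean document; each statement's English description precedes it below -/
import Mathlib

section
/- The axiom scheme AM4 is sound: for any Kripke model M, world w, action model U and event α, M, w ⊨ [U,α]K_i φ if and only if M, w ⊨ pre(α) → ⋀_{β : α Q_i β} K_i [U,β]φ, where the conjunction ranges over the finitely many events β with α Q_i β. -/
universe u

/-- Formulas of action model logic over atoms `P` and agents `A`. A dynamic
modality `dia E Q pre α φ` carries an action model `U = ⟨E, Q, pre⟩` (events,
accessibility relations, precondition function) and an event `α : E`. -/
inductive Form (P A : Type) : Type 1 where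
  | atom : P → Form P A
  | neg : Form P A → Form P A
  | conj : Form P A → Form P A → Form P A
  | know : A → Form P A → Form P A
  | dia : (E : Type) → (A → E → E → Prop) → (E → Form P A) → E → Form P A → Form P A

/-- A Kripke model. -/
structure Model (P A : Type) : Type 1 where
  W : Type
  R : A → W → W → Prop
  V : P → W → Prop

/-- Product update of `M` with an action model `⟨E, Q, pre⟩`, where
`D v β` states that `v` satisfies the precondition `pre β`. -/
def Model.update {P A : Type} (M : Model P A) (E : Type) (Q : A → E → E → Prop)
    (D : M.W → E → Prop) : Model P A where
  W := {p : M.W × E // D p.1 p.2}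
  R i x y := M.R i x.1.1 y.1.1 ∧ Q i x.1.2 y.1.2
  V p x := M.V p x.1.1

/-- Satisfaction. -/
def Sat {P A : Type} : Form P A → (M : Model P A) → M.W → Prop
  | .atom p, M, w => M.V p w
  | .neg φ, M, w => ¬ Sat φ M w
  | .conj φ ψ, M, w => Sat φ M w ∧ Sat ψ M w
  | .know i φ, M, w => ∀ w', M.R i w w' → Sat φ M w'
  | .dia E Q pre α φ, M, w =>
      ∃ h : Sat (pre α) M w,
        Sat φ (M.update E Q (fun v β => Sat (pre β) M v)) ⟨(w, α), h⟩

/-- `[U,α]φ := ¬⟨U,α⟩¬φ`. -/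
def Box {P A : Type} (E : Type) (Q : A → E → E → Prop) (pre : E → Form P A)
    (α : E) (φ : Form P A) : Form P A :=
  .neg (.dia E Q pre α (.neg φ))


/-- Soundness of AM4: for a finite action model,
`M, w ⊨ [U,α]K_i φ ↔ M, w ⊨ pre(α) → ⋀_{β : α Q_i β} K_i [U,β]φ`,
the (finite) conjunction ranging over all events `β` with `α Q_i β`. -/
theorem stmt_15 {P A : Type} (M : Model P A) (w : M.W) (E : Type) [Fintype E]
    (Q : A → E → E → Prop) (pre : E → Form P A) (α : E) (i : A) (φ : Form P A) :
    Sat (Box E Q pre α (.know i φ)) M w ↔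
      (Sat (pre α) M w → ∀ β : E, Q i α β → Sat (.know i (Box E Q pre β φ)) M w) := by
  constructor
  · rintro H hpre β hQ w' hR ⟨h', hnφ⟩
    exact H ⟨hpre, fun hall => hnφ (hall ⟨(w', β), h'⟩ ⟨hR, hQ⟩)⟩
  · rintro H ⟨h, hbad⟩
    apply hbad
    intro x' hR'
    by_contra hnφ
    exact H h x'.1.2 hR'.2 x'.1.1 hR'.1 ⟨x'.2, hnφ⟩
end

section
/- Composition of action models commutes with product update on domains: for Kripke model M and action models U, U', the worlds of (M ⊗ U) ⊗ U' are in bijection with the worlds of M ⊗ (U ∘ U'), via ((w,α),α') ↦ (w,(α,α')), and this bijection preserves the accessibility relations and valuations (i.e., it is an isomorphism of Kripke models). -/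
universe u

variable {P A : Type}

/-- Accessibility relations of the composed action model `U ∘ U'`. -/
def compQ {E E' : Type} (Q : A → E → E → Prop) (Q' : A → E' → E' → Prop) :
    A → E × E' → E × E' → Prop :=
  fun i q r => Q i q.1 r.1 ∧ Q' i q.2 r.2

/-- Preconditions of the composed action model: `pre''(α,α') = ⟨U,α⟩pre'(α')`. -/
def compPre {E E' : Type} (Q : A → E → E → Prop) (pre : E → Form P A)
    (pre' : E' → Form P A) : E × E' → Form P A :=
  fun q => .dia E Q pre q.1 (pre' q.2)

/-- Composition of action models commutes with product update: the worlds of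
`(M ⊗ U) ⊗ U'` are in bijection with those of `M ⊗ (U ∘ U')` via
`((w,α),α') ↦ (w,(α,α'))`, and this bijection preserves accessibility relations
and valuations, i.e. it is an isomorphism of Kripke models. -/
theorem stmt_16 (M : Model P A) (E E' : Type)
    (Q : A → E → E → Prop) (Q' : A → E' → E' → Prop)
    (pre : E → Form P A) (pre' : E' → Form P A) :
    let M1 := M.update E Q (fun v β => Sat (pre β) M v)
    let M2 := M1.update E' Q' (fun x β' => Sat (pre' β') M1 x)
    let M3 := M.update (E × E') (compQ Q Q')
      (fun v q => Sat (compPre Q pre pre' q) M v)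
    (∀ (w : M.W) (α : E) (α' : E'),
        (∃ h : Sat (pre α) M w, Sat (pre' α') M1 ⟨(w, α), h⟩) ↔
          Sat (compPre Q pre pre' (α, α')) M w) ∧
    ∃ σ : M2.W ≃ M3.W,
      (∀ x : M2.W, (σ x).1 = (x.1.1.1.1, (x.1.1.1.2, x.1.2))) ∧
      (∀ (i : A) (x y : M2.W), M2.R i x y ↔ M3.R i (σ x) (σ y)) ∧
      (∀ (p : P) (x : M2.W), M2.V p x ↔ M3.V p (σ x)) := by
  intro M1 M2 M3
  refine ⟨fun w α α' => Iff.rfl,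
    ⟨⟨fun x => ⟨(x.1.1.1.1, (x.1.1.1.2, x.1.2)), x.1.1.2, x.2⟩,
      fun y => ⟨(⟨(y.1.1, y.1.2.1), y.2.choose⟩, y.1.2.2), y.2.choose_spec⟩,
      fun x => rfl, fun y => rfl⟩,
     fun x => rfl, fun i x y => and_assoc, fun p x => Iff.rfl⟩⟩
end

section
/- Soundness of axiom AM5: for any Kripke model M and world w, M, w ⊨ ⟨U,α⟩⟨U',β⟩φ if and only if M, w ⊨ ⟨U ∘ U', (α,β)⟩φ. -/
universe u

variable {P A : Type}

/-- An isomorphism of Kripke models. -/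
structure Iso (M N : Model P A) where
  f : M.W → N.W
  g : N.W → M.W
  gf : ∀ w, g (f w) = w
  fg : ∀ v, f (g v) = v
  hR : ∀ i w w', M.R i w w' ↔ N.R i (f w) (f w')
  hV : ∀ p w, M.V p w ↔ N.V p (f w)

/-- Satisfaction is invariant under isomorphism. -/
theorem sat_iso : ∀ (φ : Form P A) (M N : Model P A) (e : Iso M N) (w : M.W),
    Sat φ M w ↔ Sat φ N (e.f w) := by
  intro φ
  induction φ with
  | atom p => intro M N e w; exact e.hV p w
  | neg φ ih => intro M N e w; exact not_congr (ih M N e w)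
  | conj φ ψ ih1 ih2 => intro M N e w; exact and_congr (ih1 M N e w) (ih2 M N e w)
  | know i φ ih =>
    intro M N e w
    constructor
    · intro h v' hR
      have h2 := ih M N e (e.g v')
      rw [e.fg] at h2
      refine h2.mp (h _ ?_)
      have := (e.hR i w (e.g v'))
      rw [e.fg] at this
      exact this.mpr hR
    · intro h v' hR
      exact (ih M N e v').mpr (h _ ((e.hR i w v').mp hR))
  | dia E Q pre α φ ihpre ihφ =>
    intro M N e w
    let e' : Iso (M.update E Q (fun v β => Sat (pre β) M v))
        (N.update E Q (fun v β => Sat (pre β) N v)) :=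
      { f := fun x => ⟨(e.f x.1.1, x.1.2), (ihpre x.1.2 M N e x.1.1).mp x.2⟩
        g := fun y => ⟨(e.g y.1.1, y.1.2), by
          have h2 := ihpre y.1.2 M N e (e.g y.1.1)
          rw [e.fg] at h2
          exact h2.mpr y.2⟩
        gf := by rintro ⟨⟨v, γ⟩, h⟩; exact Subtype.ext (by simp [e.gf])
        fg := by rintro ⟨⟨v, γ⟩, h⟩; exact Subtype.ext (by simp [e.fg])
        hR := by
          rintro i ⟨⟨v, γ⟩, h⟩ ⟨⟨v', γ'⟩, h'⟩
          exact and_congr (e.hR i v v') Iff.rfl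
        hV := by rintro p ⟨⟨v, γ⟩, h⟩; exact e.hV p v }
    constructor
    · rintro ⟨h1, h2⟩
      exact ⟨(ihpre α M N e w).mp h1,
        (ihφ _ _ e' ⟨(w, α), h1⟩).mp h2⟩
    · rintro ⟨h1, h2⟩
      have h1' := (ihpre α M N e w).mpr h1
      refine ⟨h1', ?_⟩
      have := (ihφ _ _ e' ⟨(w, α), h1'⟩).mpr
      exact this h2

/-- Soundness of AM5: `M, w ⊨ ⟨U,α⟩⟨U',β⟩φ ↔ M, w ⊨ ⟨U ∘ U', (α,β)⟩φ`. -/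
theorem stmt_17 (M : Model P A) (w : M.W) (E E' : Type)
    (Q : A → E → E → Prop) (Q' : A → E' → E' → Prop)
    (pre : E → Form P A) (pre' : E' → Form P A)
    (α : E) (β : E') (φ : Form P A) :
    Sat (.dia E Q pre α (.dia E' Q' pre' β φ)) M w ↔
      Sat (.dia (E × E') (compQ Q Q') (compPre Q pre pre') (α, β) φ) M w := by
  set M1 := M.update E Q (fun v γ => Sat (pre γ) M v) with hM1
  set M2 := M1.update E' Q' (fun x δ => Sat (pre' δ) M1 x) with hM2
  set M3 := M.update (E × E') (compQ Q Q')
    (fun v q => Sat (compPre Q pre pre' q) M v) with hM3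
  have key : ∀ (q : M.W × E) (h : Sat (pre q.2) M q.1) (δ : E'),
      Sat (pre' δ) M1 ⟨q, h⟩ → Sat (compPre Q pre pre' (q.2, δ)) M q.1 := by
    rintro ⟨v, γ⟩ h δ h'
    exact ⟨h, h'⟩
  let e : Iso M2 M3 :=
    { f := fun x => ⟨(x.1.1.1.1, (x.1.1.1.2, x.1.2)), by
        obtain ⟨⟨⟨⟨v, γ⟩, h⟩, δ⟩, h'⟩ := x
        exact ⟨h, h'⟩⟩
      g := fun y => by
        refine ⟨(⟨(y.1.1, y.1.2.1), ?_⟩, y.1.2.2), ?_⟩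
        · exact y.2.choose
        · exact y.2.choose_spec
      gf := by
        rintro ⟨⟨⟨⟨v, γ⟩, h⟩, δ⟩, h'⟩
        exact Subtype.ext rfl
      fg := by
        rintro ⟨⟨v, ⟨γ, δ⟩⟩, h⟩
        exact Subtype.ext rfl
      hR := by
        rintro i ⟨⟨⟨⟨v, γ⟩, h⟩, δ⟩, h'⟩ ⟨⟨⟨⟨v2, γ2⟩, h2⟩, δ2⟩, h2'⟩
        show (M.R i v v2 ∧ Q i γ γ2) ∧ Q' i δ δ2 ↔
          M.R i v v2 ∧ Q i γ γ2 ∧ Q' i δ δ2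
        tauto
      hV := by
        rintro p ⟨⟨⟨⟨v, γ⟩, h⟩, δ⟩, h'⟩
        exact Iff.rfl }
  constructor
  · rintro ⟨h1, h2, h3⟩
    exact ⟨⟨h1, h2⟩, (sat_iso φ M2 M3 e ⟨(⟨(w, α), h1⟩, β), h2⟩).mp h3⟩
  · rintro ⟨⟨h1, h2⟩, h3⟩
    refine ⟨h1, h2, ?_⟩
    exact (sat_iso φ M2 M3 e ⟨(⟨(w, α), h1⟩, β), h2⟩).mpr h3
end
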